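/- arXiv:1804.09212 — 3 statements merged into one kernel-verified Lean document; each statement's English description precedes it below -/
import Mathlib

section
/- For all real $p \in (0,1)$ and $N \in \mathbb{N}$ with $pN$ a positive integer and $pN < N$: $\binom{N}{pN} \le \frac{5}{4}\frac{e^{N\mathcal{H}(p)}}{\sqrt{2\pi p(1-p)N}}$, where $\mathcal{H}$ is the natural-log Shannon entropy. -/
open Real Nat

lemma sqrtpi_le_stirlingSeq (n : ℕ) : Real.sqrt π ≤ Stirling.stirlingSeq (n+1) :=
  Stirling.stirlingSeq'_antitone.le_of_tendsto
    (Stirling.tendsto_stirlingSeq_sqrt_pi.comp (Filter.tendsto_add_atTop_nat 1)) n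

lemma stirlingSeq_le (n : ℕ) : Stirling.stirlingSeq (n+1) ≤ Real.exp 1 / Real.sqrt 2 := by
  have := Stirling.stirlingSeq'_antitone (Nat.zero_le n)
  simpa using this

lemma fact_lower (n : ℕ) (hn : 0 < n) :
    Real.sqrt π * (Real.sqrt (2*n) * ((n:ℝ) / Real.exp 1)^n) ≤ n ! := by
  obtain ⟨m, rfl⟩ := Nat.exists_eq_add_of_lt hn
  simp only [Nat.zero_add]
  have h := sqrtpi_le_stirlingSeq m
  have hD : 0 < Real.sqrt (2*(m+1:ℕ)) * (((m+1:ℕ):ℝ) / Real.exp 1)^(m+1) := by positivity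
  have := mul_le_mul_of_nonneg_right h hD.le
  rw [Stirling.stirlingSeq, div_mul_cancel₀] at this
  · exact this
  · exact hD.ne'

lemma fact_upper (n : ℕ) (hn : 0 < n) :
    (n ! : ℝ) ≤ (Real.exp 1 / Real.sqrt 2) * (Real.sqrt (2*n) * ((n:ℝ) / Real.exp 1)^n) := by
  obtain ⟨m, rfl⟩ := Nat.exists_eq_add_of_lt hn
  simp only [Nat.zero_add]
  have h := stirlingSeq_le m
  have hD : 0 < Real.sqrt (2*(m+1:ℕ)) * (((m+1:ℕ):ℝ) / Real.exp 1)^(m+1) := by positivity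
  have := mul_le_mul_of_nonneg_right h hD.le
  rw [Stirling.stirlingSeq, div_mul_cancel₀] at this
  · exact this
  · exact hD.ne'

set_option maxHeartbeats 1600000 in
/-- Upper Stirling-type bound on the binomial coefficient. -/
theorem stmt_5 (p : ℝ) (N k : ℕ) (hp : p ∈ Set.Ioo (0 : ℝ) 1)
    (hk : (k : ℝ) = p * N) (hk0 : 0 < k) (hkN : k < N) :
    ((N.choose k : ℕ) : ℝ) ≤
      (5 / 4) * Real.exp ((N : ℝ) * (-p * Real.log p - (1 - p) * Real.log (1 - p))) /
        Real.sqrt (2 * Real.pi * p * (1 - p) * N) := by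
  obtain ⟨hp0, hp1⟩ := hp
  have hq0 : (0:ℝ) < 1 - p := by linarith
  have hkle : k ≤ N := hkN.le
  have hN0 : 0 < N := hk0.trans hkN
  have hm0 : 0 < N - k := Nat.sub_pos_of_lt hkN
  have hNr : (0:ℝ) < N := by exact_mod_cast hN0
  have hm : ((N - k : ℕ) : ℝ) = (1 - p) * N := by
    rw [Nat.cast_sub hkle, hk]; ring
  set H : ℝ := -p * Real.log p - (1 - p) * Real.log (1 - p) with hH
  set E : ℝ := Real.exp ((N : ℝ) * H) with hE
  -- key power identity
  have hpk : (p:ℝ)^k = Real.exp ((k:ℝ) * Real.log p) := by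
    rw [Real.exp_nat_mul, Real.exp_log hp0]
  have hpm : (1-p)^(N-k) = Real.exp (((N-k:ℕ):ℝ) * Real.log (1-p)) := by
    rw [Real.exp_nat_mul, Real.exp_log hq0]
  have hcancel : (p:ℝ)^k * (1-p)^(N-k) * E = 1 := by
    have harg : (k:ℝ) * Real.log p + ((N-k:ℕ):ℝ) * Real.log (1-p) + (N:ℝ) * H = 0 := by
      rw [hH]
      linear_combination Real.log p * hk + Real.log (1-p) * hm
    rw [hpk, hpm, hE, ← Real.exp_add, ← Real.exp_add, harg, Real.exp_zero]
  have hNN : ((k:ℝ))^k * (((N-k:ℕ)):ℝ)^(N-k) * E = (N:ℝ)^N := by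
    rw [hk, hm, mul_pow, mul_pow]
    calc p ^ k * (N:ℝ) ^ k * ((1 - p) ^ (N - k) * (N:ℝ) ^ (N - k)) * E
        = ((N:ℝ) ^ k * (N:ℝ) ^ (N - k)) * (p ^ k * (1-p)^(N-k) * E) := by ring
      _ = (N:ℝ)^N := by rw [hcancel, ← pow_add, Nat.add_sub_cancel' hkle, mul_one]
  have hexp0 : Real.exp 1 ≠ 0 := (Real.exp_pos 1).ne'
  have hpow : ((N:ℝ) / Real.exp 1)^N
      = (((k:ℝ)/Real.exp 1)^k * ((((N-k:ℕ)):ℝ)/Real.exp 1)^(N-k)) * E := by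
    have hee : Real.exp 1 ^ k * Real.exp 1 ^ (N-k) = Real.exp 1 ^ N := by
      rw [← pow_add, Nat.add_sub_cancel' hkle]
    rw [div_pow, div_pow, div_pow, ← hNN, ← hee]
    field_simp
  -- factorial bounds
  have hfl1 := fact_lower k hk0
  have hfl2 := fact_lower (N-k) hm0
  have hfu := fact_upper N hN0
  set FN : ℝ := (Real.exp 1 / Real.sqrt 2) * (Real.sqrt (2*N) * ((N:ℝ) / Real.exp 1)^N) with hFN
  set Fk : ℝ := Real.sqrt π * (Real.sqrt (2*k) * ((k:ℝ) / Real.exp 1)^k) with hFk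
  set Fm : ℝ := Real.sqrt π * (Real.sqrt (2*(N-k:ℕ)) * (((N-k:ℕ):ℝ) / Real.exp 1)^(N-k)) with hFm
  have hFk0 : 0 < Fk := by
    rw [hFk]; have : (0:ℝ) < (k:ℝ) := by exact_mod_cast hk0
    positivity
  have hFm0 : 0 < Fm := by
    rw [hFm]; have : (0:ℝ) < ((N-k:ℕ):ℝ) := by exact_mod_cast hm0
    positivity
  have hfact : (N.choose k) * k ! * (N-k)! = N ! := Nat.choose_mul_factorial_mul_factorial hkle
  have hchoose : ((N.choose k : ℕ) : ℝ) = (N ! : ℝ) / ((k ! : ℝ) * ((N-k)! : ℝ)) := by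
    have hk1 : (0:ℝ) < (k ! : ℝ) := by exact_mod_cast Nat.factorial_pos k
    have hk2 : (0:ℝ) < ((N-k)! : ℝ) := by exact_mod_cast Nat.factorial_pos (N-k)
    rw [eq_div_iff (by positivity)]
    push_cast [← hfact]
    ring
  have step1 : ((N.choose k : ℕ) : ℝ) ≤ FN / (Fk * Fm) := by
    rw [hchoose]
    apply div_le_div₀ (by rw [hFN]; positivity) hfu (by positivity)
    exact mul_le_mul hfl1 hfl2 hFm0.le (by positivity)
  refine step1.trans ?_
  -- now the algebraic computation
  have hsp : Real.sqrt p ≠ 0 := by positivity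
  have hsq : Real.sqrt (1-p) ≠ 0 := by positivity
  have hsN : Real.sqrt (N:ℝ) ≠ 0 := by positivity
  have hs2 : Real.sqrt 2 ≠ 0 := by positivity
  have hsπ : Real.sqrt π ≠ 0 := by positivity
  have hsk : Real.sqrt (2*(k:ℝ)) = Real.sqrt 2 * (Real.sqrt p * Real.sqrt (N:ℝ)) := by
    rw [hk, ← Real.sqrt_mul hp0.le, ← Real.sqrt_mul (by norm_num)]
  have hsm : Real.sqrt (2*((N-k:ℕ):ℝ)) = Real.sqrt 2 * (Real.sqrt (1-p) * Real.sqrt (N:ℝ)) := by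
    rw [hm, ← Real.sqrt_mul hq0.le, ← Real.sqrt_mul (by norm_num)]
  have hsN2 : Real.sqrt (2*(N:ℝ)) = Real.sqrt 2 * Real.sqrt (N:ℝ) := by
    rw [← Real.sqrt_mul (by norm_num)]
  have hππ : Real.sqrt π * Real.sqrt π = π := Real.mul_self_sqrt Real.pi_pos.le
  have htarget : Real.sqrt (2 * π * p * (1 - p) * (N:ℝ))
      = Real.sqrt 2 * Real.sqrt π * (Real.sqrt p * (Real.sqrt (1-p) * Real.sqrt (N:ℝ))) := by
    rw [show 2 * π * p * (1 - p) * (N:ℝ) = 2 * (π * (p * ((1-p) * N))) by ring,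
      Real.sqrt_mul (by norm_num), Real.sqrt_mul Real.pi_pos.le,
      Real.sqrt_mul hp0.le, Real.sqrt_mul hq0.le]
    ring
  have hPk0 : ((k:ℝ)/Real.exp 1)^k ≠ 0 := by
    have : (0:ℝ) < (k:ℝ) := by exact_mod_cast hk0
    positivity
  have hPm0 : (((N-k:ℕ):ℝ)/Real.exp 1)^(N-k) ≠ 0 := by
    have : (0:ℝ) < ((N-k:ℕ):ℝ) := by exact_mod_cast hm0
    positivity
  have hEq : FN / (Fk * Fm)
      = (Real.exp 1 / (Real.sqrt 2 * Real.sqrt 2 * (Real.sqrt π * Real.sqrt π)))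
        * (E / (Real.sqrt p * (Real.sqrt (1-p) * Real.sqrt (N:ℝ)))) := by
    rw [hFN, hFk, hFm, hpow, hsk, hsm, hsN2]
    set Pk : ℝ := ((k:ℝ)/Real.exp 1)^k with hPkdef
    set Pm : ℝ := (((N-k:ℕ):ℝ)/Real.exp 1)^(N-k) with hPmdef
    field_simp
  rw [hEq, htarget]
  have hfinal : Real.exp 1 / (Real.sqrt 2 * Real.sqrt 2 * (Real.sqrt π * Real.sqrt π))
      ≤ (5/4) / (Real.sqrt 2 * Real.sqrt π) := by
    rw [div_le_div_iff₀ (by positivity) (by positivity)]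
    have h2 : Real.sqrt 2 * Real.sqrt 2 = 2 := Real.mul_self_sqrt (by norm_num)
    rw [h2, hππ]
    have he : Real.exp 1 < 2.7182818286 := Real.exp_one_lt_d9
    have hs2u : Real.sqrt 2 ≤ 1.41422 := by
      rw [show (1.41422:ℝ) = Real.sqrt (1.41422^2) from (Real.sqrt_sq (by norm_num)).symm]
      exact Real.sqrt_le_sqrt (by norm_num)
    have hsπu : Real.sqrt π ≤ 1.775 := by
      rw [show (1.775:ℝ) = Real.sqrt (1.775^2) from (Real.sqrt_sq (by norm_num)).symm]
      exact Real.sqrt_le_sqrt (by nlinarith [Real.pi_lt_d2])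
    have hπl : (3.141592:ℝ) < π := Real.pi_gt_d6
    have hs2pos : (0:ℝ) < Real.sqrt 2 := by positivity
    have hsπpos : (0:ℝ) < Real.sqrt π := Real.sqrt_pos.mpr Real.pi_pos
    calc Real.exp 1 * (Real.sqrt 2 * Real.sqrt π)
        ≤ 2.7182818286 * (1.41422 * 1.775) := by
          apply mul_le_mul he.le
            (mul_le_mul hs2u hsπu hsπpos.le (by norm_num)) (by positivity) (by norm_num)
      _ ≤ 5/4 * (2 * π) := by nlinarith
  calc Real.exp 1 / (Real.sqrt 2 * Real.sqrt 2 * (Real.sqrt π * Real.sqrt π))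
        * (E / (Real.sqrt p * (Real.sqrt (1-p) * Real.sqrt (N:ℝ))))
      ≤ (5/4) / (Real.sqrt 2 * Real.sqrt π)
        * (E / (Real.sqrt p * (Real.sqrt (1-p) * Real.sqrt (N:ℝ)))) := by
        apply mul_le_mul_of_nonneg_right hfinal (by positivity)
    _ = 5 / 4 * E / (Real.sqrt 2 * Real.sqrt π * (Real.sqrt p * (Real.sqrt (1-p) * Real.sqrt (N:ℝ)))) := by
        ring
end

section
/- For all real $p \in (0,1)$ and $N \in \mathbb{N}$ with $pN$ a positive integer and $pN < N$: $\binom{N}{pN} \ge \frac{16}{25}\frac{e^{N\mathcal{H}(p)}}{\sqrt{2\pi p(1-p)N}}$, where $\mathcal{H}$ is the natural-log Shannon entropy. -/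
open Real

lemma fact_ge (n : ℕ) : Real.sqrt π * (Real.sqrt (2*n) * ((n:ℝ)/Real.exp 1)^n) ≤ n.factorial := by
  cases n with
  | zero => simp
  | succ m =>
    have h1 : Real.sqrt π ≤ Stirling.stirlingSeq (m+1) := by
      have := (Stirling.stirlingSeq'_antitone).le_of_tendsto
        (Stirling.tendsto_stirlingSeq_sqrt_pi.comp (Filter.tendsto_add_atTop_nat 1)) m
      simpa using this
    have hd : 0 < Real.sqrt (2*(m+1:ℕ)) * (((m+1:ℕ):ℝ)/Real.exp 1)^(m+1) := by positivity
    rw [Stirling.stirlingSeq, le_div_iff₀ hd] at h1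
    linarith [h1]

lemma fact_le (n : ℕ) (hn : n ≠ 0) :
    (n.factorial : ℝ) ≤ (Real.exp 1 / Real.sqrt 2) * (Real.sqrt (2*n) * ((n:ℝ)/Real.exp 1)^n) := by
  obtain ⟨m, rfl⟩ := Nat.exists_eq_succ_of_ne_zero hn
  show ((m+1).factorial : ℝ) ≤ (Real.exp 1 / Real.sqrt 2) * (Real.sqrt (2*((m+1:ℕ):ℝ)) * (((m+1:ℕ):ℝ)/Real.exp 1)^(m+1))
  have h1 : Stirling.stirlingSeq (m+1) ≤ Stirling.stirlingSeq 1 := by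
    have := Stirling.stirlingSeq'_antitone (Nat.zero_le m)
    simpa using this
  rw [Stirling.stirlingSeq_one] at h1
  have hd : 0 < Real.sqrt (2*(m+1:ℕ)) * (((m+1:ℕ):ℝ)/Real.exp 1)^(m+1) := by positivity
  rw [Stirling.stirlingSeq, div_le_iff₀ hd] at h1
  linarith [h1]

set_option maxHeartbeats 1000000 in
/-- Lower Stirling-type bound on the binomial coefficient. -/
theorem stmt_6 (p : ℝ) (N k : ℕ) (hp : p ∈ Set.Ioo (0 : ℝ) 1)
    (hk : (k : ℝ) = p * N) (hk0 : 0 < k) (hkN : k < N) :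
    (16 / 25) * Real.exp ((N : ℝ) * (-p * Real.log p - (1 - p) * Real.log (1 - p))) /
        Real.sqrt (2 * Real.pi * p * (1 - p) * N) ≤
      ((N.choose k : ℕ) : ℝ) := by
  obtain ⟨hp0, hp1⟩ := hp
  set m := N - k with hmdef
  have hm : k + m = N := by omega
  have hm0 : 0 < m := by omega
  set n : ℝ := (N : ℝ) with hn
  set a : ℝ := (k : ℝ) with ha
  set b : ℝ := (m : ℝ) with hb
  have ha1 : 1 ≤ a := by rw [ha]; exact_mod_cast hk0
  have hb1 : 1 ≤ b := by rw [hb]; exact_mod_cast hm0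
  have hab : a + b = n := by rw [ha, hb, hn, ← hm]; push_cast; ring
  have hn0 : 0 < n := by rw [hn]; exact_mod_cast Nat.pos_of_ne_zero (by omega)
  have ha0 : 0 < a := by linarith
  have hb0 : 0 < b := by linarith
  have hk' : p * n = a := by rw [hk]
  have hb' : (1 - p) * n = b := by linear_combination -hab - hk'
  -- entropy rewrite
  have hlogp : Real.log p = Real.log a - Real.log n := by
    rw [← Real.log_div (by positivity) (by positivity)]
    congr 1
    field_simp [← hk']
    exact hk'
  have hlogq : Real.log (1 - p) = Real.log b - Real.log n := by
    rw [← Real.log_div (by positivity) (by positivity)]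
    congr 1
    field_simp [← hb']
    exact hb'
  have hE : Real.exp ((N : ℝ) * (-p * Real.log p - (1 - p) * Real.log (1 - p)))
      = n ^ N / (a ^ k * b ^ m) := by
    have h1 : (N : ℝ) * (-p * Real.log p - (1 - p) * Real.log (1 - p))
        = (N : ℕ) * Real.log n - ((k : ℕ) * Real.log a + (m : ℕ) * Real.log b) := by
      rw [hlogp, hlogq]
      push_cast
      rw [← hn, ← ha, ← hb]
      linear_combination (Real.log n - Real.log a) * hk' + (Real.log n - Real.log b) * hb' + (Real.log n) * hab
    rw [h1, Real.exp_sub, Real.exp_add, Real.exp_nat_mul, Real.exp_nat_mul, Real.exp_nat_mul,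
      Real.exp_log hn0, Real.exp_log ha0, Real.exp_log hb0]
  -- sqrt rewrite
  have hS : Real.sqrt (2 * Real.pi * p * (1 - p) * (N:ℝ))
      = Real.sqrt (2 * Real.pi) * (Real.sqrt a * Real.sqrt b / Real.sqrt n) := by
    have harg : 2 * Real.pi * p * (1 - p) * (N:ℝ) = 2 * Real.pi * (a * b / n) := by
      rw [← hn]
      field_simp [← hk', ← hb']
      rw [← hk', ← hb']; ring
    rw [harg, Real.sqrt_mul (by positivity), Real.sqrt_div (by positivity : (0:ℝ) ≤ a*b),
      Real.sqrt_mul ha0.le]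
  -- binomial as factorials
  rw [hE, hS]
  have hfact : ((N.choose k : ℕ) : ℝ) = (N.factorial : ℝ) / ((k.factorial : ℝ) * (m.factorial : ℝ)) := by
    rw [Nat.cast_choose ℝ hkN.le]
  have e1 := Real.exp_pos 1
  -- Stirling lower bound for the quotient
  have hlow : Real.sqrt π * (Real.sqrt (2*(N:ℝ)) * ((N:ℝ)/Real.exp 1)^N) /
      ((Real.exp 1 / Real.sqrt 2 * (Real.sqrt (2*(k:ℝ)) * ((k:ℝ)/Real.exp 1)^k)) *
       (Real.exp 1 / Real.sqrt 2 * (Real.sqrt (2*(m:ℝ)) * ((m:ℝ)/Real.exp 1)^m)))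
      ≤ (N.factorial : ℝ) / ((k.factorial : ℝ) * (m.factorial : ℝ)) := by
    apply div_le_div₀ (by positivity) (fact_ge N) (by positivity)
    exact mul_le_mul (fact_le k (by omega)) (fact_le m (by omega)) (by positivity) (by positivity)
  rw [← hfact] at hlow
  refine le_trans ?_ hlow
  -- pure algebra + the constant comparison 16 e^2 ≤ 50 π
  have h2a : Real.sqrt (2*(k:ℝ)) = Real.sqrt 2 * Real.sqrt a := by
    rw [← ha, Real.sqrt_mul (by norm_num)]
  have h2b : Real.sqrt (2*(m:ℝ)) = Real.sqrt 2 * Real.sqrt b := by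
    rw [← hb, Real.sqrt_mul (by norm_num)]
  have h2n : Real.sqrt (2*(N:ℝ)) = Real.sqrt 2 * Real.sqrt n := by
    rw [← hn, Real.sqrt_mul (by norm_num)]
  have hek : Real.exp 1 ^ k * Real.exp 1 ^ m = Real.exp 1 ^ N := by rw [← pow_add, hm]
  have sa0 : 0 < Real.sqrt a := Real.sqrt_pos.mpr ha0
  have sb0 : 0 < Real.sqrt b := Real.sqrt_pos.mpr hb0
  have sn0 : 0 < Real.sqrt n := Real.sqrt_pos.mpr hn0
  have s20 : 0 < Real.sqrt 2 := by positivity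
  have spi0 : 0 < Real.sqrt π := Real.sqrt_pos.mpr Real.pi_pos
  have s2pi0 : 0 < Real.sqrt (2*π) := Real.sqrt_pos.mpr (by positivity)
  set T : ℝ := n^N/(a^k*b^m) * (Real.sqrt n/(Real.sqrt a*Real.sqrt b)) with hT
  have hT0 : 0 ≤ T := by positivity
  have hLeq : 16/25 * (n ^ N / (a ^ k * b ^ m)) /
      (Real.sqrt (2*π) * (Real.sqrt a * Real.sqrt b / Real.sqrt n))
      = (16/(25*Real.sqrt (2*π))) * T := by
    rw [hT]; field_simp
  have hReq : Real.sqrt π * (Real.sqrt (2*(N:ℝ)) * ((N:ℝ)/Real.exp 1)^N) /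
      ((Real.exp 1 / Real.sqrt 2 * (Real.sqrt (2*(k:ℝ)) * ((k:ℝ)/Real.exp 1)^k)) *
       (Real.exp 1 / Real.sqrt 2 * (Real.sqrt (2*(m:ℝ)) * ((m:ℝ)/Real.exp 1)^m)))
      = (Real.sqrt 2 * Real.sqrt π / Real.exp 1 ^ 2) * T := by
    rw [h2a, h2b, h2n, ← ha, ← hb, ← hn, div_pow, div_pow, div_pow, hT]
    rw [← hek]
    have he2 : Real.exp 2 = Real.exp 1 * Real.exp 1 := by rw [← Real.exp_add]; norm_num
    field_simp
  rw [hLeq, hReq]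
  apply mul_le_mul_of_nonneg_right _ hT0
  rw [div_le_div_iff₀ (by positivity) (by positivity)]
  have key : Real.sqrt 2 * Real.sqrt π * Real.sqrt (2*π) = 2*π := by
    rw [← Real.sqrt_mul (by norm_num : (0:ℝ) ≤ 2), Real.mul_self_sqrt (by positivity)]
  nlinarith [key, Real.exp_one_lt_d9, Real.pi_gt_d6, Real.exp_pos 1]
end

section
/- Let $\mathbf{A} \in \{0,1\}^{n\times N}$ be the adjacency matrix of an $(s, d, \epsilon)$-expander graph with $\epsilon \in (0, 1/2)$. Then for every $s$-sparse $\mathbf{x} \in \mathbb{R}^N$, $\|\mathbf{A}\mathbf{x}\|_1 \ge (1 - 2\epsilon) d \|\mathbf{x}\|_1$. -/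
open Finset

private lemma abel_aux16 (a c : ℕ → ℝ) (K : ℝ)
    (hmono : ∀ {k l : ℕ}, k ≤ l → a l ≤ a k) :
    ∀ t : ℕ, (∀ k < t, ∑ l ∈ range (k+1), c l ≤ K * (k+1)) →
      ∑ k ∈ range t, c k * a k + (K * t - ∑ k ∈ range t, c k) * a t
        ≤ K * ∑ k ∈ range t, a k := by
  intro t
  induction t with
  | zero => simp
  | succ t ih =>
    intro hR
    have IH := ih (fun k hk => hR k (by omega))
    have h1 : ∑ l ∈ range (t+1), c l ≤ K * (t+1) := hR t (by omega)
    rw [sum_range_succ, sum_range_succ, sum_range_succ]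
    rw [sum_range_succ] at h1
    have hat : a (t+1) ≤ a t := hmono (Nat.le_succ t)
    have hfac : 0 ≤ K * (t+1) - (∑ l ∈ range t, c l + c t) := by linarith
    have key : (K * (t+1) - (∑ l ∈ range t, c l + c t)) * a (t+1)
        ≤ (K * (t+1) - (∑ l ∈ range t, c l + c t)) * a t :=
      mul_le_mul_of_nonneg_left hat hfac
    have expand : (K * (t+1) - (∑ l ∈ range t, c l + c t)) * a t
        = (K * t - ∑ l ∈ range t, c l) * a t + K * a t - c t * a t := by
      push_cast; ring
    push_cast at key expand IH h1 ⊢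
    nlinarith [IH, key, expand]

private lemma abel_sum16 (a c : ℕ → ℝ) (K : ℝ) (ha0 : ∀ k, 0 ≤ a k)
    (hmono : ∀ {k l : ℕ}, k ≤ l → a l ≤ a k) (t : ℕ)
    (hR : ∀ k < t, ∑ l ∈ range (k+1), c l ≤ K * (k+1)) :
    ∑ k ∈ range t, c k * a k ≤ K * ∑ k ∈ range t, a k := by
  have H := abel_aux16 a c K hmono t hR
  rcases Nat.eq_zero_or_pos t with h | h
  · simp [h]
  · have h2 : ∑ l ∈ range t, c l ≤ K * t := by
      have := hR (t-1) (by omega)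
      have ht : t - 1 + 1 = t := by omega
      rw [ht] at this
      have hc : ((t - 1 : ℕ) : ℝ) + 1 = (t : ℝ) := by
        have hx : ((t - 1 : ℕ) : ℝ) = (t : ℝ) - 1 := by
          push_cast [Nat.cast_sub h]; ring
        linarith
      calc ∑ l ∈ range t, c l ≤ K * (((t-1 : ℕ) : ℝ) + 1) := this
        _ = K * t := by rw [hc]
    have : 0 ≤ (K * t - ∑ l ∈ range t, c l) * a t :=
      mul_nonneg (by linarith) (ha0 t)
    linarith

open Classical in
/-- Lower RIP-1 bound (Berinde et al.): if `A` is the 0/1 adjacency matrix of an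
`(s,d,ε)`-expander with `ε ∈ (0,1/2)`, then every `s`-sparse `x` satisfies
`‖A x‖₁ ≥ (1 - 2ε) d ‖x‖₁`. -/
theorem stmt_16 (n N s d : ℕ) (ε : ℝ) (hd : 0 < d) (hε : ε ∈ Set.Ioo (0 : ℝ) (1 / 2))
    (A : Matrix (Fin n) (Fin N) ℝ)
    (hbin : ∀ j i, A j i = 0 ∨ A j i = 1)
    (hreg : ∀ i, (Finset.univ.filter (fun j => A j i = 1)).card = d)
    (hexp : ∀ S : Finset (Fin N), S.card ≤ s →
      (1 - ε) * d * S.card ≤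
        ((Finset.univ.filter (fun j => ∃ i ∈ S, A j i = 1)).card : ℝ))
    (x : Fin N → ℝ)
    (hsparse : (Finset.univ.filter (fun i => x i ≠ 0)).card ≤ s) :
    (1 - 2 * ε) * d * ∑ i, |x i| ≤ ∑ j, |A.mulVec x j| := by
  classical
  obtain ⟨hε0, hε2⟩ := hε
  set T : Finset (Fin N) := Finset.univ.filter (fun i => x i ≠ 0) with hTdef
  have hxT : ∀ i, i ∉ T → x i = 0 := by
    intro i hi
    by_contra h
    exact hi (by simp [hTdef, h])
  rcases T.eq_empty_or_nonempty with hTe | ⟨i₀, hi₀⟩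
  · have hx0 : ∀ i, x i = 0 := fun i => hxT i (by simp [hTe])
    have h1 : ∑ i, |x i| = 0 := by simp [hx0]
    rw [h1]
    have h2 : (0:ℝ) ≤ ∑ j, |A.mulVec x j| :=
      Finset.sum_nonneg (fun j _ => abs_nonneg _)
    linarith
  set t := T.card with htdef
  have hts : t ≤ s := hsparse
  -- sorted enumeration of the support
  set g : Fin t → Fin N := fun k => ((T.orderIsoOfFin htdef.symm k : T) : Fin N) with hg
  have hginj : Function.Injective g := fun k l hkl =>
    (T.orderIsoOfFin htdef.symm).injective (Subtype.coe_injective hkl)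
  set f : Fin t → ℝ := fun k => -|x (g k)| with hf
  set σ : Equiv.Perm (Fin t) := Tuple.sort f with hσ
  set E : Fin t → Fin N := fun k => g (σ k) with hE
  have hEinj : Function.Injective E := hginj.comp σ.injective
  have hEmem : ∀ k, E k ∈ T := fun k => (T.orderIsoOfFin htdef.symm (σ k)).2
  have hEanti : ∀ k l : Fin t, k ≤ l → |x (E l)| ≤ |x (E k)| := by
    intro k l hkl
    have h := Tuple.monotone_sort f hkl
    simp only [Function.comp, hf] at h
    have h' : -|x (g (σ k))| ≤ -|x (g (σ l))| := h
    rw [hE]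
    linarith
  set EN : ℕ → Fin N := fun m => if h : m < t then E ⟨m, h⟩ else i₀ with hEN
  have hENval : ∀ m (h : m < t), EN m = E ⟨m, h⟩ := by
    intro m h; simp [hEN, h]
  have hENT : ∀ m, m < t → EN m ∈ T := by
    intro m h; rw [hENval m h]; exact hEmem _
  have hENinj : ∀ m ∈ range t, ∀ m' ∈ range t, EN m = EN m' → m = m' := by
    intro m hm m' hm' hmm
    rw [mem_range] at hm hm'
    rw [hENval m hm, hENval m' hm'] at hmm
    have := hEinj hmm
    exact congrArg Fin.val this
  have hENanti : ∀ m m' : ℕ, m ≤ m' → m' < t → |x (EN m')| ≤ |x (EN m)| := by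
    intro m m' hmm h'
    have hm : m < t := lt_of_le_of_lt (le_of_le_of_eq hmm rfl) h'
    rw [hENval m hm, hENval m' h']
    exact hEanti ⟨m, hm⟩ ⟨m', h'⟩ hmm
  have himg : (range t).image EN = T := by
    apply Finset.eq_of_subset_of_card_le
    · intro i hi
      rcases Finset.mem_image.mp hi with ⟨m, hm, rfl⟩
      exact hENT m (mem_range.mp hm)
    · rw [Finset.card_image_of_injOn hENinj, Finset.card_range]
  -- weights and collision counts
  set a : ℕ → ℝ := fun m => if m < t then |x (EN m)| else 0 with ha
  have ha0 : ∀ m, 0 ≤ a m := by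
    intro m; rw [ha]; dsimp only
    split
    · exact abs_nonneg _
    · exact le_refl _
  have haval : ∀ m, m < t → a m = |x (EN m)| := by
    intro m h; simp [ha, h]
  have hanti : ∀ {k l : ℕ}, k ≤ l → a l ≤ a k := by
    intro k l hkl
    by_cases hl : l < t
    · rw [haval l hl, haval k (lt_of_le_of_lt hkl hl)]
      exact hENanti k l hkl hl
    · rw [ha]; dsimp only; rw [if_neg hl]
      exact ha0 k
  set c : ℕ → ℝ := fun k => if k < t then
      (((Finset.univ.filter (fun j => A j (EN k) = 1 ∧ ∃ l, l < k ∧ A j (EN l) = 1)).card : ℕ) : ℝ)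
    else 0 with hc
  have hcval : ∀ k, k < t → c k =
      ((Finset.univ.filter (fun j => A j (EN k) = 1 ∧ ∃ l, l < k ∧ A j (EN l) = 1)).card : ℝ) := by
    intro k h; simp [hc, h]
  -- edge sets per row
  set F : Fin n → Finset ℕ := fun j => (range t).filter (fun k => A j (EN k) = 1) with hF
  -- mulVec rewritten
  have h_mv : ∀ j, A.mulVec x j = ∑ k ∈ F j, x (EN k) := by
    intro j
    have e1 : A.mulVec x j = ∑ i, A j i * x i := rfl
    have e2 : ∑ i ∈ T, A j i * x i = ∑ i, A j i * x i := by
      rw [hTdef]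
      apply Finset.sum_filter_of_ne
      intro i _ h hxi
      exact h (by rw [hxi, mul_zero])
    have e3 : ∑ i ∈ T, A j i * x i = ∑ m ∈ range t, A j (EN m) * x (EN m) := by
      rw [← himg, Finset.sum_image hENinj]
    have e4 : ∑ m ∈ range t, A j (EN m) * x (EN m) = ∑ k ∈ F j, x (EN k) := by
      rw [hF]; dsimp only
      rw [Finset.sum_filter]
      apply Finset.sum_congr rfl
      intro m _
      rcases hbin j (EN m) with h | h <;> simp [h]
    rw [e1, ← e2, e3, e4]
  -- row-wise lower bound
  have hrow : ∀ j, (∑ k ∈ F j, a k)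
      - 2 * ∑ k ∈ (F j).filter (fun k => ∃ l, l < k ∧ A j (EN l) = 1), a k
      ≤ |A.mulVec x j| := by
    intro j
    rcases (F j).eq_empty_or_nonempty with hFe | hFne
    · rw [h_mv j, hFe]
      simp
    · set m := (F j).min' hFne with hm
      have hmF : m ∈ F j := (F j).min'_mem hFne
      have hmrange : m < t := by
        have := (Finset.mem_filter.mp hmF).1
        exact mem_range.mp this
      have hmedge : A j (EN m) = 1 := (Finset.mem_filter.mp hmF).2
      have hfilter : (F j).filter (fun k => ∃ l, l < k ∧ A j (EN l) = 1)
          = (F j).erase m := by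
        ext k
        simp only [Finset.mem_filter, Finset.mem_erase]
        constructor
        · rintro ⟨hkF, l, hlk, hledge⟩
          refine ⟨?_, hkF⟩
          have hkt : k < t := mem_range.mp (Finset.mem_filter.mp hkF).1
          have hlF : l ∈ F j := by
            rw [hF]; simp only [Finset.mem_filter, mem_range]
            exact ⟨lt_trans hlk hkt, hledge⟩
          have hml : m ≤ l := (F j).min'_le l hlF
          omega
        · rintro ⟨hkm, hkF⟩
          refine ⟨hkF, m, ?_, hmedge⟩
          have := (F j).min'_le k hkF
          omega
      rw [hfilter, h_mv j]
      have hsplit : ∑ k ∈ F j, x (EN k)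
          = x (EN m) + ∑ k ∈ (F j).erase m, x (EN k) :=
        (Finset.add_sum_erase (F j) (fun k => x (EN k)) hmF).symm
      have hsplita : ∑ k ∈ F j, a k = a m + ∑ k ∈ (F j).erase m, a k :=
        (Finset.add_sum_erase (F j) a hmF).symm
      have habs : |∑ k ∈ (F j).erase m, x (EN k)| ≤ ∑ k ∈ (F j).erase m, a k := by
        refine le_trans (Finset.abs_sum_le_sum_abs _ _) ?_
        apply Finset.sum_le_sum
        intro k hk
        have hkt : k < t :=
          mem_range.mp (Finset.mem_filter.mp (Finset.mem_of_mem_erase hk)).1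
        rw [haval k hkt]
      have hkey : |x (EN m)| - |∑ k ∈ (F j).erase m, x (EN k)|
          ≤ |∑ k ∈ F j, x (EN k)| := by
        rw [hsplit]
        have := abs_sub_abs_le_abs_sub (x (EN m)) (-(∑ k ∈ (F j).erase m, x (EN k)))
        rw [abs_neg, sub_neg_eq_add] at this
        exact this
      have ham : a m = |x (EN m)| := haval m hmrange
      rw [hsplita, ham]
      linarith
  -- summing the row bounds
  have hsum_deg : ∑ j, ∑ k ∈ F j, a k = ∑ k ∈ range t, (d : ℝ) * a k := by
    have e1 : ∀ j, ∑ k ∈ F j, a k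
        = ∑ k ∈ range t, if A j (EN k) = 1 then a k else 0 := by
      intro j; rw [hF]; exact Finset.sum_filter _ _
    calc ∑ j, ∑ k ∈ F j, a k
        = ∑ j, ∑ k ∈ range t, if A j (EN k) = 1 then a k else 0 := by
          exact Finset.sum_congr rfl (fun j _ => e1 j)
      _ = ∑ k ∈ range t, ∑ j, if A j (EN k) = 1 then a k else 0 :=
          Finset.sum_comm
      _ = ∑ k ∈ range t, (d : ℝ) * a k := by
          apply Finset.sum_congr rfl
          intro k _
          rw [← Finset.sum_filter, Finset.sum_const, nsmul_eq_mul, hreg (EN k)]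
  have hsum_col : ∑ j, ∑ k ∈ (F j).filter (fun k => ∃ l, l < k ∧ A j (EN l) = 1), a k
      = ∑ k ∈ range t, c k * a k := by
    have e1 : ∀ j, (F j).filter (fun k => ∃ l, l < k ∧ A j (EN l) = 1)
        = (range t).filter (fun k => A j (EN k) = 1 ∧ ∃ l, l < k ∧ A j (EN l) = 1) := by
      intro j; rw [hF, Finset.filter_filter]
    calc ∑ j, ∑ k ∈ (F j).filter (fun k => ∃ l, l < k ∧ A j (EN l) = 1), a k
        = ∑ j, ∑ k ∈ range t,
            if A j (EN k) = 1 ∧ ∃ l, l < k ∧ A j (EN l) = 1 then a k else 0 := by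
          apply Finset.sum_congr rfl
          intro j _
          rw [e1 j, Finset.sum_filter]
      _ = ∑ k ∈ range t, ∑ j,
            if A j (EN k) = 1 ∧ ∃ l, l < k ∧ A j (EN l) = 1 then a k else 0 :=
          Finset.sum_comm
      _ = ∑ k ∈ range t, c k * a k := by
          apply Finset.sum_congr rfl
          intro k hk
          rw [← Finset.sum_filter, Finset.sum_const, nsmul_eq_mul,
            hcval k (mem_range.mp hk)]
  -- prefix collision bound from expansion
  have hprefix : ∀ k, k < t → ∑ l ∈ range (k+1), c l ≤ (ε * d) * (k+1) := by
    intro k hk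
    set S : Finset (Fin N) := (range (k+1)).image EN with hS
    have hsubrange : (range (k+1) : Finset ℕ) ⊆ range t := by
      intro m hm; rw [mem_range] at hm ⊢; omega
    have hScard : S.card = k + 1 := by
      rw [hS, Finset.card_image_of_injOn
        (fun m hm m' hm' => hENinj m (hsubrange hm) m' (hsubrange hm')),
        Finset.card_range]
    have hSs : S.card ≤ s := by rw [hScard]; omega
    have hxp := hexp S hSs
    rw [hScard] at hxp
    set NS := Finset.univ.filter (fun j => ∃ i ∈ S, A j i = 1) with hNS
    have hsub : NS ⊆ (range (k+1)).biUnion (fun l =>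
        Finset.univ.filter (fun j => A j (EN l) = 1 ∧ ¬ ∃ l', l' < l ∧ A j (EN l') = 1)) := by
      intro j hj
      rw [hNS, Finset.mem_filter] at hj
      obtain ⟨-, i, hiS, hedge⟩ := hj
      rw [hS, Finset.mem_image] at hiS
      obtain ⟨m0, hm0, rfl⟩ := hiS
      set P : Finset ℕ := (range (k+1)).filter (fun m => A j (EN m) = 1) with hP
      have hPne : P.Nonempty := ⟨m0, Finset.mem_filter.mpr ⟨hm0, hedge⟩⟩
      set l := P.min' hPne with hl
      have hlP : l ∈ P := P.min'_mem hPne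
      have hlrange : l ∈ range (k+1) := (Finset.mem_filter.mp hlP).1
      apply Finset.mem_biUnion.mpr
      refine ⟨l, hlrange, Finset.mem_filter.mpr ⟨Finset.mem_univ j,
        (Finset.mem_filter.mp hlP).2, ?_⟩⟩
      rintro ⟨l', hl'l, hl'edge⟩
      have hl'P : l' ∈ P := by
        rw [hP, Finset.mem_filter, mem_range]
        have : l < k + 1 := mem_range.mp hlrange
        exact ⟨by omega, hl'edge⟩
      have := P.min'_le l' hl'P
      omega
    have hcardle : (NS.card : ℝ) ≤ ∑ l ∈ range (k+1),
        ((Finset.univ.filter (fun j => A j (EN l) = 1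
          ∧ ¬ ∃ l', l' < l ∧ A j (EN l') = 1)).card : ℝ) := by
      have h1 := Finset.card_le_card hsub
      have h2 := Finset.card_biUnion_le (s := range (k+1)) (t := fun l =>
        Finset.univ.filter (fun j => A j (EN l) = 1 ∧ ¬ ∃ l', l' < l ∧ A j (EN l') = 1))
      have := le_trans h1 h2
      exact_mod_cast le_trans (Nat.cast_le.mpr this) (by push_cast; exact le_refl _)
    have hsplit : ∀ l, l < t →
        ((Finset.univ.filter (fun j => A j (EN l) = 1
          ∧ ¬ ∃ l', l' < l ∧ A j (EN l') = 1)).card : ℝ) = (d : ℝ) - c l := by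
      intro l hl
      have key := Finset.card_filter_add_card_filter_not
        (s := Finset.univ.filter (fun j : Fin n => A j (EN l) = 1))
        (p := fun j => ∃ l', l' < l ∧ A j (EN l') = 1)
      rw [Finset.filter_filter, Finset.filter_filter, hreg (EN l)] at key
      rw [hcval l hl]
      have : ((Finset.univ.filter (fun j => A j (EN l) = 1
          ∧ ¬ ∃ l', l' < l ∧ A j (EN l') = 1)).card : ℕ)
          + ((Finset.univ.filter (fun j => A j (EN l) = 1
          ∧ ∃ l', l' < l ∧ A j (EN l') = 1)).card : ℕ) = d := by
        omega
      push_cast [← this]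
      ring
    have hfinal : ∑ l ∈ range (k+1),
        ((Finset.univ.filter (fun j => A j (EN l) = 1
          ∧ ¬ ∃ l', l' < l ∧ A j (EN l') = 1)).card : ℝ)
        = (d : ℝ) * (k+1) - ∑ l ∈ range (k+1), c l := by
      rw [Finset.sum_congr rfl (fun l hl => hsplit l
        (by have := mem_range.mp hl; omega))]
      rw [Finset.sum_sub_distrib, Finset.sum_const, Finset.card_range,
        nsmul_eq_mul]
      push_cast; ring
    rw [hfinal] at hcardle
    have : (1 - ε) * d * (k+1) ≤ (d : ℝ) * (k+1) - ∑ l ∈ range (k+1), c l := by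
      calc (1 - ε) * d * (k+1) ≤ (NS.card : ℝ) := by exact_mod_cast hxp
        _ ≤ _ := hcardle
    nlinarith [this]
  -- Abel summation
  have habel : ∑ k ∈ range t, c k * a k ≤ (ε * d) * ∑ k ∈ range t, a k :=
    abel_sum16 a c (ε * d) ha0 hanti t hprefix
  -- total weight
  have hweight : ∑ i, |x i| = ∑ k ∈ range t, a k := by
    have e2 : ∑ i ∈ T, |x i| = ∑ i, |x i| := by
      rw [hTdef]
      apply Finset.sum_filter_of_ne
      intro i _ h hxi
      exact h (by rw [hxi, abs_zero])
    rw [← e2, ← himg, Finset.sum_image hENinj]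
    apply Finset.sum_congr rfl
    intro m hm
    rw [haval m (mem_range.mp hm)]
  -- assemble
  have hbig : ∑ j, ((∑ k ∈ F j, a k)
      - 2 * ∑ k ∈ (F j).filter (fun k => ∃ l, l < k ∧ A j (EN l) = 1), a k)
      ≤ ∑ j, |A.mulVec x j| :=
    Finset.sum_le_sum (fun j _ => hrow j)
  rw [Finset.sum_sub_distrib] at hbig
  rw [← Finset.mul_sum] at hbig
  rw [hsum_deg, hsum_col] at hbig
  rw [← Finset.mul_sum] at hbig
  have hsa : 0 ≤ ∑ k ∈ range t, a k := Finset.sum_nonneg (fun k _ => ha0 k)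
  rw [hweight]
  nlinarith [hbig, habel]
end
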